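/- Let N = 1, p = 2, Ω₂ = (1,2), ξ(y) = −artanh(e^{−2y}), g(y) = sinh(2y)^{1/2}, Ω₁ = ξ(Ω₂), and Tu = g·(u∘ξ). Then for all u ∈ W^{1,2}(Ω₁) one has the pointwise identity g⁴·(Tu − (Tu)'') = Tu − Tu'' on Ω₂ (where u is smooth), and consequently 𝔞_{2,Ω₂}(Tu, Tv) = 𝔞_{2,Ω₁}(u, v) for all u ∈ W^{1,2}(Ω₁) and v ∈ C_c^∞(Ω₁). -/

import Mathlib

open MeasureTheory

/-- Inverse hyperbolic tangent. -/
noncomputable def artanh (t : ℝ) : ℝ := Real.log ((1 + t) / (1 - t)) / 2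

open Real Set

noncomputable def xi0 (y : ℝ) : ℝ := -_root_.artanh (Real.exp (-2 * y))
noncomputable def g0 (y : ℝ) : ℝ := Real.sqrt (Real.sinh (2 * y))

lemma sinh_pos' {y : ℝ} (hy : 0 < y) : 0 < Real.sinh (2 * y) :=
  Real.sinh_pos_iff.2 (by linarith)

lemma g0_pos {y : ℝ} (hy : 0 < y) : 0 < g0 y := Real.sqrt_pos.2 (sinh_pos' hy)

lemma g0_sq {y : ℝ} (hy : 0 < y) : g0 y ^ 2 = Real.sinh (2 * y) :=
  Real.sq_sqrt (sinh_pos' hy).le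

lemma hasDerivAt_xi0 {y : ℝ} (hy : 0 < y) :
    HasDerivAt xi0 (1 / Real.sinh (2 * y)) y := by
  have ht1 : Real.exp (-2 * y) < 1 := by
    rw [Real.exp_lt_one_iff]; linarith
  have ht0 : 0 < Real.exp (-2 * y) := Real.exp_pos _
  have hde : HasDerivAt (fun z : ℝ => Real.exp (-2 * z)) (Real.exp (-2 * y) * (-2)) y := by
    have h1 : HasDerivAt (fun z : ℝ => -2 * z) (-2) y := by
      simpa using (hasDerivAt_id y).const_mul (-2 : ℝ)
    exact h1.exp
  have hnum : HasDerivAt (fun z : ℝ => 1 + Real.exp (-2 * z)) (Real.exp (-2 * y) * (-2)) y :=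
    ((hasDerivAt_const y (1:ℝ)).add hde).congr_deriv (by ring)
  have hden : HasDerivAt (fun z : ℝ => 1 - Real.exp (-2 * z)) (-(Real.exp (-2 * y) * (-2))) y :=
    ((hasDerivAt_const y (1:ℝ)).sub hde).congr_deriv (by ring)
  have hdenne : (1 : ℝ) - Real.exp (-2 * y) ≠ 0 := by nlinarith
  have hq := hnum.div hden hdenne
  have hqpos : 0 < (1 + Real.exp (-2 * y)) / (1 - Real.exp (-2 * y)) := by
    apply div_pos <;> nlinarith
  have hlog := (hq.log hqpos.ne')
  have : HasDerivAt xi0 (-((Real.exp (-2 * y) * (-2) * (1 - Real.exp (-2 * y)) -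
      (1 + Real.exp (-2 * y)) * -(Real.exp (-2 * y) * (-2))) / (1 - Real.exp (-2 * y)) ^ 2 /
      ((1 + Real.exp (-2 * y)) / (1 - Real.exp (-2 * y))) / 2)) y := by
    unfold xi0 _root_.artanh
    exact (hlog.div_const 2).neg
  convert this using 1
  have hs : Real.sinh (2 * y) = (1 - Real.exp (-2*y)^2) / (2 * Real.exp (-2*y)) := by
    rw [Real.sinh_eq]
    rw [show -(2*y) = -2*y by ring, show (2:ℝ)*y = -(-2*y) by ring, Real.exp_neg]
    field_simp
  rw [hs]
  set t := Real.exp (-2*y)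
  have h1 : (1:ℝ) - t^2 ≠ 0 := by nlinarith
  field_simp
  ring

lemma hasDerivAt_g0 {y : ℝ} (hy : 0 < y) :
    HasDerivAt g0 (Real.cosh (2 * y) / g0 y) y := by
  have hs : HasDerivAt (fun z : ℝ => Real.sinh (2 * z)) (Real.cosh (2 * y) * 2) y := by
    have h1 : HasDerivAt (fun z : ℝ => 2 * z) (2) y := by
      simpa using (hasDerivAt_id y).const_mul (2 : ℝ)
    exact (Real.hasDerivAt_sinh _).comp y h1
  have := (Real.hasDerivAt_sqrt (sinh_pos' hy).ne').comp y hs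
  refine this.congr_deriv ?_
  unfold g0
  field_simp

lemma xi0_cont : ContinuousOn xi0 (Set.Icc 1 2) := fun y hy =>
  ((hasDerivAt_xi0 (by linarith [hy.1] : (0:ℝ) < y)).continuousAt).continuousWithinAt

lemma xi0_mono : StrictMonoOn xi0 (Set.Icc 1 2) := by
  apply strictMonoOn_of_hasDerivWithinAt_pos (convex_Icc 1 2) xi0_cont
    (f' := fun y => 1 / Real.sinh (2 * y))
  · intro y hy
    rw [interior_Icc] at hy
    exact (hasDerivAt_xi0 (by linarith [hy.1])).hasDerivWithinAt
  · intro y hy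
    rw [interior_Icc] at hy
    exact div_pos one_pos (sinh_pos' (by linarith [hy.1]))

lemma xi0_image : xi0 '' Set.Ioo 1 2 = Set.Ioo (xi0 1) (xi0 2) := by
  apply Subset.antisymm
  · rintro x ⟨y, hy, rfl⟩
    exact ⟨xi0_mono (by norm_num) (by constructor <;> [linarith [hy.1]; linarith [hy.2]]) hy.1,
      xi0_mono (by constructor <;> [linarith [hy.1]; linarith [hy.2]]) (by norm_num) hy.2⟩
  · exact intermediate_value_Ioo (by norm_num) xi0_cont

lemma hasDerivAt_cosh2 (y : ℝ) :
    HasDerivAt (fun z : ℝ => Real.cosh (2 * z)) (2 * Real.sinh (2 * y)) y := by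
  have h1 : HasDerivAt (fun z : ℝ => 2 * z) 2 y := by
    simpa using (hasDerivAt_id y).const_mul (2 : ℝ)
  exact ((Real.hasDerivAt_cosh _).comp y h1).congr_deriv (by ring)

lemma hasDerivAt_sinh2 (y : ℝ) :
    HasDerivAt (fun z : ℝ => Real.sinh (2 * z)) (2 * Real.cosh (2 * y)) y := by
  have h1 : HasDerivAt (fun z : ℝ => 2 * z) 2 y := by
    simpa using (hasDerivAt_id y).const_mul (2 : ℝ)
  exact ((Real.hasDerivAt_sinh _).comp y h1).congr_deriv (by ring)

/-- derivative of `Tu` given differentiability of `u` at `ξ y`. -/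
lemma hasDerivAt_T {u : ℝ → ℝ} {y : ℝ} (hy : 0 < y) (hu : DifferentiableAt ℝ u (xi0 y)) :
    HasDerivAt (fun z => g0 z * u (xi0 z))
      (Real.cosh (2 * y) / g0 y * u (xi0 y)
        + g0 y * (1 / Real.sinh (2 * y)) * deriv u (xi0 y)) y := by
  have hcomp : HasDerivAt (fun z => u (xi0 z)) (deriv u (xi0 y) * (1 / Real.sinh (2 * y))) y :=
    (hu.hasDerivAt).comp y (hasDerivAt_xi0 hy)
  have := (hasDerivAt_g0 hy).mul hcomp
  refine this.congr_deriv ?_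
  ring

/-- Part 1: pointwise identity for smooth u. -/
lemma part1 {u : ℝ → ℝ} (hu : ContDiff ℝ (⊤ : ℕ∞) u) {y : ℝ} (hy : 0 < y) :
    g0 y ^ 4 * (g0 y * u (xi0 y) - deriv (deriv (fun z => g0 z * u (xi0 z))) y)
      = g0 y * u (xi0 y) - g0 y * deriv (deriv u) (xi0 y) := by
  have hu' : ContDiff ℝ (⊤ : ℕ∞) u := hu.of_le (by simp)
  have hu1 : Differentiable ℝ u := hu'.differentiable (by simp)
  have hu2 : Differentiable ℝ (deriv u) :=
    ((contDiff_infty_iff_deriv.mp hu').2).differentiable (by simp)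
  set F : ℝ → ℝ := fun z => Real.cosh (2 * z) / g0 z * u (xi0 z)
        + g0 z * (1 / Real.sinh (2 * z)) * deriv u (xi0 z) with hF
  have hev : deriv (fun z => g0 z * u (xi0 z)) =ᶠ[nhds y] F := by
    filter_upwards [Ioi_mem_nhds hy] with z hz
    exact (hasDerivAt_T hz (hu1 _)).deriv
  -- derivative of F at y
  have hS := sinh_pos' hy
  have hgpos := g0_pos hy
  have hcomp : HasDerivAt (fun z => u (xi0 z)) (deriv u (xi0 y) * (1 / Real.sinh (2 * y))) y :=
    ((hu1 _).hasDerivAt).comp y (hasDerivAt_xi0 hy)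
  have hcomp' : HasDerivAt (fun z => deriv u (xi0 z))
      (deriv (deriv u) (xi0 y) * (1 / Real.sinh (2 * y))) y :=
    ((hu2 _).hasDerivAt).comp y (hasDerivAt_xi0 hy)
  have h1 : HasDerivAt (fun z => Real.cosh (2 * z) / g0 z)
      ((2 * Real.sinh (2 * y) * g0 y - Real.cosh (2 * y) * (Real.cosh (2 * y) / g0 y))
        / g0 y ^ 2) y :=
    (hasDerivAt_cosh2 y).div (hasDerivAt_g0 hy) hgpos.ne'
  have h2 : HasDerivAt (fun z => g0 z * (1 / Real.sinh (2 * z)))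
      ((Real.cosh (2 * y) / g0 y) * (1 / Real.sinh (2*y))
        + g0 y * (-(2 * Real.cosh (2*y)) / Real.sinh (2*y) ^ 2)) y := by
    have hinv : HasDerivAt (fun z => 1 / Real.sinh (2 * z))
        (-(2 * Real.cosh (2*y)) / Real.sinh (2*y) ^ 2) y := by
      have := (hasDerivAt_sinh2 y).inv hS.ne'; simp only [one_div]; exact this
    exact (hasDerivAt_g0 hy).mul hinv
  have hdF : HasDerivAt F
      (((2 * Real.sinh (2 * y) * g0 y - Real.cosh (2 * y) * (Real.cosh (2 * y) / g0 y))
        / g0 y ^ 2) * u (xi0 y)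
       + (Real.cosh (2 * y) / g0 y) * (deriv u (xi0 y) * (1 / Real.sinh (2 * y)))
       + (((Real.cosh (2 * y) / g0 y) * (1 / Real.sinh (2*y))
        + g0 y * (-(2 * Real.cosh (2*y)) / Real.sinh (2*y) ^ 2)) * deriv u (xi0 y)
       + (g0 y * (1 / Real.sinh (2 * y))) * (deriv (deriv u) (xi0 y) * (1 / Real.sinh (2 * y))))) y :=
    (h1.mul hcomp).add ((h2.mul hcomp') )
  rw [hev.deriv_eq, hdF.deriv]
  have hg2 : Real.sinh (2*y) = g0 y ^ 2 := (g0_sq hy).symm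
  have hC : Real.cosh (2*y) ^ 2 = (g0 y ^ 2) ^ 2 + 1 := by
    rw [Real.cosh_sq', ← hg2]; ring
  rw [hg2]
  set G := g0 y
  set U := u (xi0 y)
  set U' := deriv u (xi0 y)
  set U'' := deriv (deriv u) (xi0 y)
  set C := Real.cosh (2*y)
  have hGne : G ≠ 0 := hgpos.ne'
  have hclean : (2 * G ^ 2 * G - C * (C / G)) / G ^ 2 * U + C / G * (U' * (1 / G ^ 2)) +
      ((C / G * (1 / G ^ 2) + G * (-(2 * C) / (G ^ 2) ^ 2)) * U' +
        G * (1 / G ^ 2) * (U'' * (1 / G ^ 2)))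
      = 2 * G * U + (U'' - C ^ 2 * U) / G ^ 3 := by
    field_simp
    ring
  rw [hclean]
  field_simp
  linear_combination U * hC

noncomputable def AA (u v : ℝ → ℝ) : ℝ → ℝ :=
  fun y => 1 / Real.sinh (2 * y) * (u (xi0 y) * v (xi0 y))
noncomputable def psi0 (u v : ℝ → ℝ) : ℝ → ℝ :=
  fun z => Real.cosh (2 * z) * (u (xi0 z) * v (xi0 z))
noncomputable def Dpsi (u v : ℝ → ℝ) : ℝ → ℝ :=
  fun y => 2 * Real.sinh (2 * y) * (u (xi0 y) * v (xi0 y))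
      + Real.cosh (2 * y) * (AA (deriv u) v y + AA u (deriv v) y)

set_option maxHeartbeats 2000000 in
lemma part2 (u : ℝ → ℝ)
    (hu : MemLp u 2 (volume.restrict (xi0 '' Set.Ioo 1 2)))
    (hu' : MemLp (deriv u) 2 (volume.restrict (xi0 '' Set.Ioo 1 2)))
    (hud : ∀ x ∈ xi0 '' Set.Ioo 1 2, DifferentiableAt ℝ u x)
    (v : ℝ → ℝ) (hv : ContDiff ℝ (⊤ : ℕ∞) v) (hvc : HasCompactSupport v)
    (hvs : tsupport v ⊆ xi0 '' Set.Ioo 1 2) :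
    (∫ y in Set.Ioo (1:ℝ) 2, (g0 y * u (xi0 y)) * (g0 y * v (xi0 y)))
      + ∫ y in Set.Ioo (1:ℝ) 2,
          deriv (fun z => g0 z * u (xi0 z)) y * deriv (fun z => g0 z * v (xi0 z)) y
      = (∫ x in xi0 '' Set.Ioo 1 2, u x * v x)
        + ∫ x in xi0 '' Set.Ioo 1 2, deriv u x * deriv v x := by
  set Ω₁ : Set ℝ := xi0 '' Set.Ioo 1 2 with hΩ₁
  have hΩIoo : Ω₁ = Set.Ioo (xi0 1) (xi0 2) := xi0_image
  have hΩmeas : MeasurableSet Ω₁ := by rw [hΩIoo]; exact measurableSet_Ioo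
  haveI hfin : IsFiniteMeasure (volume.restrict Ω₁) := by
    constructor
    rw [Measure.restrict_apply_univ, hΩIoo]
    exact measure_Ioo_lt_top
  -- v facts
  have hv' : ContDiff ℝ (⊤ : ℕ∞) v := hv.of_le (by simp)
  have hvcont : Continuous v := hv'.continuous
  have hvd : Differentiable ℝ v := hv'.differentiable (by simp)
  have hdvcont : Continuous (deriv v) := hv'.continuous_deriv (by simp)
  have hvb : ∃ C, ∀ x, ‖v x‖ ≤ C := hvc.exists_bound_of_continuous hvcont
  have hdvb : ∃ C, ∀ x, ‖deriv v x‖ ≤ C :=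
    hvc.deriv.exists_bound_of_continuous hdvcont
  -- integrability on Ω₁
  have hui : IntegrableOn u Ω₁ := hu.integrable (by norm_num)
  have hu'i : IntegrableOn (deriv u) Ω₁ := hu'.integrable (by norm_num)
  have Iuv : IntegrableOn (fun x => u x * v x) Ω₁ := by
    have := hui.bdd_mul (hvcont.aestronglyMeasurable) (ae_of_all _ hvb.choose_spec)
    simpa [mul_comm, IntegrableOn] using this
  have Iuv' : IntegrableOn (fun x => u x * deriv v x) Ω₁ := by
    have := hui.bdd_mul (hdvcont.aestronglyMeasurable) (ae_of_all _ hdvb.choose_spec)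
    simpa [mul_comm, IntegrableOn] using this
  have Iu'v : IntegrableOn (fun x => deriv u x * v x) Ω₁ := by
    have := hu'i.bdd_mul (hvcont.aestronglyMeasurable) (ae_of_all _ hvb.choose_spec)
    simpa [mul_comm, IntegrableOn] using this
  have Iu'v' : IntegrableOn (fun x => deriv u x * deriv v x) Ω₁ := by
    have := hu'i.bdd_mul (hdvcont.aestronglyMeasurable) (ae_of_all _ hdvb.choose_spec)
    simpa [mul_comm, IntegrableOn] using this
  -- change of variables
  have hInj : Set.InjOn xi0 (Set.Ioo 1 2) :=
    (xi0_mono.injOn).mono Set.Ioo_subset_Icc_self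
  have hDW : ∀ y ∈ Set.Ioo (1:ℝ) 2,
      HasDerivWithinAt xi0 (1 / Real.sinh (2 * y)) (Set.Ioo 1 2) y := fun y hy =>
    (hasDerivAt_xi0 (by linarith [hy.1])).hasDerivWithinAt
  have CoV : ∀ G : ℝ → ℝ, ∫ x in Ω₁, G x
      = ∫ y in Set.Ioo (1:ℝ) 2, (1 / Real.sinh (2 * y)) * G (xi0 y) := by
    intro G
    rw [hΩ₁, integral_image_eq_integral_abs_deriv_smul measurableSet_Ioo hDW hInj]
    apply setIntegral_congr_fun measurableSet_Ioo
    intro y hy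
    have := sinh_pos' (show (0:ℝ) < y by linarith [hy.1])
    simp only [smul_eq_mul]
    rw [abs_of_pos (div_pos one_pos this)]
  have CoVInt : ∀ G : ℝ → ℝ, IntegrableOn G Ω₁ →
      IntegrableOn (fun y => (1 / Real.sinh (2 * y)) * G (xi0 y)) (Set.Ioo 1 2) := by
    intro G hG
    rw [hΩ₁] at hG
    rw [integrableOn_image_iff_integrableOn_abs_deriv_smul measurableSet_Ioo hDW hInj] at hG
    apply hG.congr_fun _ measurableSet_Ioo
    intro y hy
    have := sinh_pos' (show (0:ℝ) < y by linarith [hy.1])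
    simp only [smul_eq_mul]
    rw [abs_of_pos (div_pos one_pos this)]
  -- abbreviations
  have IA1 : IntegrableOn (fun y => AA u v y) (Set.Ioo 1 2) :=
    CoVInt (fun x => u x * v x) Iuv
  have IA2 : IntegrableOn (fun y => AA (deriv u) (deriv v) y) (Set.Ioo 1 2) :=
    CoVInt (fun x => deriv u x * deriv v x) Iu'v'
  have IA3 : IntegrableOn (fun y => AA (deriv u) v y) (Set.Ioo 1 2) :=
    CoVInt (fun x => deriv u x * v x) Iu'v
  have IA4 : IntegrableOn (fun y => AA u (deriv v) y) (Set.Ioo 1 2) :=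
    CoVInt (fun x => u x * deriv v x) Iuv'
  have IA34 : IntegrableOn (fun y => AA (deriv u) v y + AA u (deriv v) y) (Set.Ioo 1 2) :=
    IA3.add IA4
  have IA12 : IntegrableOn (fun y => AA u v y + AA (deriv u) (deriv v) y) (Set.Ioo 1 2) :=
    IA1.add IA2
  have hcont2 : Continuous (fun y : ℝ => Real.cosh (2 * y)) :=
    Real.continuous_cosh.comp (continuous_const.mul continuous_id)
  have hconts : Continuous (fun y : ℝ => Real.sinh (2 * y)) :=
    Real.continuous_sinh.comp (continuous_const.mul continuous_id)
  have IDpsi : IntegrableOn (fun y => Dpsi u v y) (Set.Ioo 1 2) := by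
    have h1 : IntegrableOn (fun y => (2 * Real.sinh (2*y) ^ 2) * AA u v y) (Set.Ioo 1 2) :=
      IA1.continuousOn_mul_of_subset
        ((continuous_const.mul (hconts.pow 2)).continuousOn) isCompact_Icc
        measurableSet_Ioo Set.Ioo_subset_Icc_self
    have h2 : IntegrableOn
        (fun y => Real.cosh (2*y) * (AA (deriv u) v y + AA u (deriv v) y)) (Set.Ioo 1 2) :=
      IA34.continuousOn_mul_of_subset hcont2.continuousOn isCompact_Icc
        measurableSet_Ioo Set.Ioo_subset_Icc_self
    have h12 : IntegrableOn (fun y => (2 * Real.sinh (2*y) ^ 2) * AA u v y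
        + Real.cosh (2*y) * (AA (deriv u) v y + AA u (deriv v) y)) (Set.Ioo 1 2) := h1.add h2
    apply h12.congr_fun _ measurableSet_Ioo
    intro y hy
    have hS := sinh_pos' (show (0:ℝ) < y by linarith [hy.1])
    simp only [AA, Dpsi]
    field_simp
  have ITuTv : IntegrableOn (fun y => (g0 y * u (xi0 y)) * (g0 y * v (xi0 y)))
      (Set.Ioo 1 2) := by
    have h1 : IntegrableOn (fun y => Real.sinh (2*y) ^ 2 * AA u v y) (Set.Ioo 1 2) :=
      IA1.continuousOn_mul_of_subset ((hconts.pow 2).continuousOn) isCompact_Icc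
        measurableSet_Ioo Set.Ioo_subset_Icc_self
    apply h1.congr_fun _ measurableSet_Ioo
    intro y hy
    have hy0 : (0:ℝ) < y := by linarith [hy.1]
    have hS := sinh_pos' hy0
    have hg2 := g0_sq hy0
    simp only [AA]
    field_simp
    linear_combination (-(u (xi0 y) * v (xi0 y))) * hg2
  -- pointwise derivative facts
  have hpsid : ∀ y ∈ Set.Ioo (1:ℝ) 2, HasDerivAt (psi0 u v) (Dpsi u v y) y := by
    intro y hy
    have hy0 : (0:ℝ) < y := by linarith [hy.1]
    have hS := sinh_pos' hy0
    have hxO : xi0 y ∈ Ω₁ := ⟨y, hy, rfl⟩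
    have hucomp : HasDerivAt (fun z => u (xi0 z))
        (deriv u (xi0 y) * (1 / Real.sinh (2 * y))) y :=
      (hud _ hxO).hasDerivAt.comp y (hasDerivAt_xi0 hy0)
    have hvcomp : HasDerivAt (fun z => v (xi0 z))
        (deriv v (xi0 y) * (1 / Real.sinh (2 * y))) y :=
      (hvd _).hasDerivAt.comp y (hasDerivAt_xi0 hy0)
    have h := (hasDerivAt_cosh2 y).mul (hucomp.mul hvcomp)
    refine h.congr_deriv ?_
    simp only [Dpsi, AA, Pi.mul_apply]
    ring
  have hpt : ∀ y ∈ Set.Ioo (1:ℝ) 2,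
      (g0 y * u (xi0 y)) * (g0 y * v (xi0 y))
        + deriv (fun z => g0 z * u (xi0 z)) y * deriv (fun z => g0 z * v (xi0 z)) y
      = AA u v y + AA (deriv u) (deriv v) y + Dpsi u v y := by
    intro y hy
    have hy0 : (0:ℝ) < y := by linarith [hy.1]
    have hS := sinh_pos' hy0
    have hgpos := g0_pos hy0
    have hxO : xi0 y ∈ Ω₁ := ⟨y, hy, rfl⟩
    rw [(hasDerivAt_T hy0 (hud _ hxO)).deriv, (hasDerivAt_T hy0 (hvd _)).deriv]
    have hg2 : Real.sinh (2*y) = g0 y ^ 2 := (g0_sq hy0).symm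
    have hC : Real.cosh (2*y) ^ 2 = (g0 y ^ 2) ^ 2 + 1 := by
      rw [Real.cosh_sq', ← hg2]; ring
    simp only [AA, Dpsi]
    rw [hg2]
    set G := g0 y
    set U := u (xi0 y); set V := v (xi0 y)
    set U' := deriv u (xi0 y); set V' := deriv v (xi0 y)
    set C := Real.cosh (2*y)
    have hGne : G ≠ 0 := hgpos.ne'
    field_simp
    linear_combination (U * V) * hC
  -- the FTC step
  have hz1 : v (xi0 1) = 0 := by
    by_contra h
    have h1 : xi0 1 ∈ Ω₁ := hvs (subset_tsupport v (Function.mem_support.2 h))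
    rw [hΩIoo] at h1
    exact lt_irrefl _ h1.1
  have hz2 : v (xi0 2) = 0 := by
    by_contra h
    have h1 : xi0 2 ∈ Ω₁ := hvs (subset_tsupport v (Function.mem_support.2 h))
    rw [hΩIoo] at h1
    exact lt_irrefl _ h1.2
  have hcontpsi : ContinuousOn (psi0 u v) (Set.Icc 1 2) := by
    intro y hy
    have hy0 : (0:ℝ) < y := by linarith [hy.1]
    have hxc : ContinuousAt xi0 y := (hasDerivAt_xi0 hy0).continuousAt
    by_cases hc : xi0 y ∈ tsupport v
    · have hxO : xi0 y ∈ Ω₁ := hvs hc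
      exact (hcont2.continuousAt.mul
        (((hud _ hxO).continuousAt.comp hxc).mul
          (hvcont.continuousAt.comp hxc))).continuousWithinAt
    · have hopen : IsOpen (tsupport v)ᶜ := (isClosed_tsupport v).isOpen_compl
      have hev : psi0 u v =ᶠ[nhds y] fun _ => 0 := by
        filter_upwards [hxc.preimage_mem_nhds (hopen.mem_nhds hc)] with z hz
        simp [psi0, image_eq_zero_of_notMem_tsupport hz]
      exact (continuousAt_const.congr hev.symm).continuousWithinAt
  have hIDint : IntervalIntegrable (Dpsi u v) volume 1 2 := by
    rw [intervalIntegrable_iff_integrableOn_Ioc_of_le one_le_two,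
      integrableOn_Ioc_iff_integrableOn_Ioo]
    exact IDpsi
  have hD0 : ∫ y in Set.Ioo (1:ℝ) 2, Dpsi u v y = 0 := by
    rw [← integral_Ioc_eq_integral_Ioo, ← intervalIntegral.integral_of_le one_le_two]
    rw [intervalIntegral.integral_eq_sub_of_hasDeriv_right_of_le one_le_two hcontpsi
      (fun y hy => (hpsid y hy).hasDerivWithinAt) hIDint]
    simp [psi0, hz1, hz2]
  -- assembly
  have IdTdT : IntegrableOn (fun y => deriv (fun z => g0 z * u (xi0 z)) y
      * deriv (fun z => g0 z * v (xi0 z)) y) (Set.Ioo 1 2) := by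
    have hsum : IntegrableOn (fun y => (AA u v y + AA (deriv u) (deriv v) y + Dpsi u v y)
        - (g0 y * u (xi0 y)) * (g0 y * v (xi0 y))) (Set.Ioo 1 2) :=
      (IA12.add IDpsi).sub ITuTv
    apply hsum.congr_fun _ measurableSet_Ioo
    intro y hy
    have h := hpt y hy
    simp only [Pi.add_apply, Pi.sub_apply]
    linarith [h]
  rw [← integral_add ITuTv IdTdT]
  have hmid : ∫ y in Set.Ioo (1:ℝ) 2,
      ((g0 y * u (xi0 y)) * (g0 y * v (xi0 y))
        + deriv (fun z => g0 z * u (xi0 z)) y * deriv (fun z => g0 z * v (xi0 z)) y)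
      = ∫ y in Set.Ioo (1:ℝ) 2, (AA u v y + AA (deriv u) (deriv v) y + Dpsi u v y) :=
    setIntegral_congr_fun measurableSet_Ioo (fun y hy => hpt y hy)
  rw [hmid, integral_add IA12 IDpsi, integral_add IA1 IA2, hD0, add_zero]
  congr 1
  · exact (CoV (fun x => u x * v x)).symm
  · exact (CoV (fun x => deriv u x * deriv v x)).symm

/-- Example: `Ω₂ = (1,2)`, `ξ(y) = −artanh(e^{−2y})`, `g(y) = sinh(2y)^{1/2}`,
`Ω₁ = ξ(Ω₂)`, `Tu = g · (u∘ξ)`. Then for smooth `u` one has the pointwise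
identity `g⁴ (Tu − (Tu)'') = Tu − Tu''` on `Ω₂`, and consequently
`𝔞_{2,Ω₂}(Tu, Tv) = 𝔞_{2,Ω₁}(u, v)` for all `u ∈ W^{1,2}(Ω₁)` and
`v ∈ C_c^∞(Ω₁)`. -/
theorem stmt9
    (Ω₂ : Set ℝ) (hΩ₂ : Ω₂ = Set.Ioo 1 2)
    (ξ g : ℝ → ℝ)
    (hξ : ξ = fun y => -_root_.artanh (Real.exp (-2 * y)))
    (hg : g = fun y => Real.sqrt (Real.sinh (2 * y)))
    (Ω₁ : Set ℝ) (hΩ₁ : Ω₁ = ξ '' Ω₂)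
    (T : (ℝ → ℝ) → (ℝ → ℝ)) (hT : T = fun u => fun y => g y * u (ξ y)) :
    (∀ u : ℝ → ℝ, ContDiff ℝ (⊤ : ℕ∞) u → ∀ y ∈ Ω₂,
      g y ^ 4 * (T u y - deriv (deriv (T u)) y) = T u y - T (deriv (deriv u)) y) ∧
    (∀ u : ℝ → ℝ,
      MemLp u 2 (volume.restrict Ω₁) →
      MemLp (deriv u) 2 (volume.restrict Ω₁) →
      (∀ x ∈ Ω₁, DifferentiableAt ℝ u x) →
      ∀ v : ℝ → ℝ, ContDiff ℝ (⊤ : ℕ∞) v → HasCompactSupport v → tsupport v ⊆ Ω₁ →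
        (∫ y in Ω₂, T u y * T v y) + (∫ y in Ω₂, deriv (T u) y * deriv (T v) y)
          = (∫ x in Ω₁, u x * v x) + ∫ x in Ω₁, deriv u x * deriv v x) := by
  subst hT hΩ₁ hΩ₂ hξ hg
  constructor
  · intro u hu y hy
    exact part1 hu (show (0:ℝ) < y by linarith [hy.1])
  · intro u hu hu' hud v hv hvc hvs
    exact part2 u hu hu' hud v hv hvc hvs
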